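/- arXiv:1311.3701 — 4 statements merged into one kernel-verified Lean document; each statement's English description precedes it below -/
import Mathlib

section
/- Let R be a commutative unital ring, G a topological space, Γ a group equipped with the discrete topology, and c : G → Γ a continuous map. Let A be the R-submodule of the R-module of all functions G → R consisting of the locally constant functions with compact support, and for each n ∈ Γ let A_n := {f ∈ A : supp(f) ⊆ c⁻¹(n)}. Then each A_n is an R-submodule of A, the family (A_n)_{n∈Γ} is independent (if a finite sum Σ f_n with f_n ∈ A_n for distinct indices n is zero, then every f_n is zero), and A is the internal direct sum ⨁_{n∈Γ} A_n; in particular every f ∈ A is a finite sum f = Σ_n f_n with f_n ∈ A_n. -/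
/-!
A locally constant function has clopen support, so a locally constant function supported
inside a compact set is itself compactly supported. As `Γ` is discrete, the fibres
`c⁻¹(n)` are clopen and the compact set `supp f` meets only finitely many of them; cutting `f`
along these fibres writes it as a finite sum of homogeneous components, and the disjointness of
the fibres makes such a decomposition unique.
-/

open Function Set

section Support

variable {X M : Type*} [TopologicalSpace X]

theorem IsLocallyConstant.isClosed_support [Zero M] {f : X → M} (hf : IsLocallyConstant f) :
    IsClosed (support f) :=
  (hf.isOpen_fiber 0).isClosed_compl

theorem IsLocallyConstant.isCompact_support_of_subset [Zero M] {g : X → M} {K : Set X}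
    (hg : IsLocallyConstant g) (hK : IsCompact K) (hgK : support g ⊆ K) :
    IsCompact (support g) :=
  hK.of_isClosed_subset hg.isClosed_support hgK

theorem IsLocallyConstant.indicator [Zero M] {f : X → M} (hf : IsLocallyConstant f) {U : Set X}
    (hU : IsClopen U) : IsLocallyConstant (U.indicator f) :=
  (LocallyConstant.indicator ⟨f, hf⟩ hU).isLocallyConstant

end Support

section Fibres

variable {G Γ M : Type*} [AddCommMonoid M] {c : G → Γ}

theorem Finset.sum_apply_of_support_subset_fiber {S : Finset Γ} {f : Γ → G → M}
    (hf : ∀ n ∈ S, support (f n) ⊆ c ⁻¹' {n}) {x : G} (hx : c x ∈ S) :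
    (∑ n ∈ S, f n) x = f (c x) x := by
  rw [Finset.sum_apply]
  exact Finset.sum_eq_single_of_mem (c x) hx fun m hm hmx =>
    notMem_support.mp fun h => hmx (hf m hm h).symm

theorem eq_zero_of_sum_eq_zero_of_support_subset_fiber {S : Finset Γ} {f : Γ → G → M}
    (hf : ∀ n ∈ S, support (f n) ⊆ c ⁻¹' {n}) (hsum : ∑ n ∈ S, f n = 0) {n : Γ}
    (hn : n ∈ S) : f n = 0 := by
  funext x
  by_contra hx
  have hcx : c x = n := hf n hn hx
  have hsum_x := Finset.sum_apply_of_support_subset_fiber hf (hcx ▸ hn)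
  rw [hsum, hcx] at hsum_x
  exact hx hsum_x.symm

theorem Finset.sum_indicator_fiber {S : Finset Γ} {f : G → M} (hS : c '' support f ⊆ S) :
    ∑ n ∈ S, (c ⁻¹' {n}).indicator f = f := by
  classical
  funext x
  simp only [Finset.sum_apply, indicator_apply, Set.mem_preimage, Set.mem_singleton_iff,
    Finset.sum_ite_eq]
  split_ifs with hx
  · rfl
  · by_contra hfx
    exact hx (hS ⟨x, Ne.symm hfx, rfl⟩)

end Fibres

section Grading

variable (R M : Type*) {G Γ : Type*} [Semiring R] [AddCommMonoid M] [Module R M]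
  [TopologicalSpace G]

def compactlySupportedLocallyConstant : Submodule R (G → M) where
  carrier := {f | IsLocallyConstant f ∧ IsCompact (support f)}
  zero_mem' := ⟨IsLocallyConstant.const 0, by simp⟩
  add_mem' {f g} hf hg :=
    ⟨hf.1.add hg.1, (hf.1.add hg.1).isCompact_support_of_subset (hf.2.union hg.2)
      (support_add f g)⟩
  smul_mem' t f hf :=
    ⟨hf.1.comp (t • ·), (hf.1.comp (t • ·)).isCompact_support_of_subset hf.2
      (support_const_smul_subset t f)⟩

def supportedOn (s : Set G) : Submodule R (G → M) where
  carrier := {f | support f ⊆ s}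
  zero_mem' := by simp
  add_mem' hf hg := (support_add _ _).trans (union_subset hf hg)
  smul_mem' t f hf := (support_const_smul_subset t f).trans hf

def homogeneousComponent (c : G → Γ) (n : Γ) : Submodule R (G → M) :=
  compactlySupportedLocallyConstant R M ⊓ supportedOn R M (c ⁻¹' {n})

variable {R M}

theorem mem_compactlySupportedLocallyConstant {f : G → M} :
    f ∈ compactlySupportedLocallyConstant R M ↔ IsLocallyConstant f ∧ IsCompact (support f) :=
  Iff.rfl

theorem mem_homogeneousComponent {c : G → Γ} {n : Γ} {f : G → M} :
    f ∈ homogeneousComponent R M c n ↔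
      f ∈ compactlySupportedLocallyConstant R M ∧ support f ⊆ c ⁻¹' {n} :=
  Iff.rfl

variable [TopologicalSpace Γ] [DiscreteTopology Γ] {c : G → Γ}

theorem indicator_fiber_mem_homogeneousComponent (hc : Continuous c) {f : G → M}
    (hf : f ∈ compactlySupportedLocallyConstant R M) (n : Γ) :
    (c ⁻¹' {n}).indicator f ∈ homogeneousComponent R M c n := by
  rw [mem_compactlySupportedLocallyConstant] at hf
  have hlc := hf.1.indicator ((isClopen_discrete {n}).preimage hc)
  have hsupp : support ((c ⁻¹' {n}).indicator f) = c ⁻¹' {n} ∩ support f :=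
    support_indicator
  exact ⟨⟨hlc, hlc.isCompact_support_of_subset hf.2 (hsupp.subset.trans inter_subset_right)⟩,
    hsupp.subset.trans inter_subset_left⟩

theorem exists_finset_sum_homogeneousComponent (hc : Continuous c) {f : G → M}
    (hf : f ∈ compactlySupportedLocallyConstant R M) :
    ∃ (S : Finset Γ) (g : Γ → G → M),
      (∀ n ∈ S, g n ∈ homogeneousComponent R M c n) ∧ f = ∑ n ∈ S, g n := by
  have hfin : (c '' support f).Finite := (hf.2.image hc).finite_of_discrete
  refine ⟨hfin.toFinset, fun n => (c ⁻¹' {n}).indicator f,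
    fun n _ => indicator_fiber_mem_homogeneousComponent hc hf n, ?_⟩
  exact (Finset.sum_indicator_fiber (by simp)).symm

end Grading

theorem steinberg_grading_module_general
    {G Γ R : Type*} [TopologicalSpace G] [TopologicalSpace Γ] [DiscreteTopology Γ]
    [CommRing R] (c : G → Γ) (hc : Continuous c)
    (A : Set (G → R))
    (hA : A = {f | IsLocallyConstant f ∧ IsCompact (Function.support f)})
    (An : Γ → Set (G → R))
    (hAn : ∀ n, An n = {f ∈ A | Function.support f ⊆ c ⁻¹' {n}}) :
    (∀ n : Γ, An n ⊆ A ∧ (0 : G → R) ∈ An n ∧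
      (∀ f g : G → R, f ∈ An n → g ∈ An n → f + g ∈ An n) ∧
      (∀ (t : R) (f : G → R), f ∈ An n → t • f ∈ An n)) ∧
    (∀ (S : Finset Γ) (f : Γ → (G → R)), (∀ n ∈ S, f n ∈ An n) →
      (∑ n ∈ S, f n) = 0 → ∀ n ∈ S, f n = 0) ∧
    (∀ f ∈ A, ∃ (S : Finset Γ) (g : Γ → (G → R)),
      (∀ n ∈ S, g n ∈ An n) ∧ f = ∑ n ∈ S, g n) := by
  have hA' : A = (compactlySupportedLocallyConstant (G := G) R R : Set (G → R)) := by
    rw [hA]; rfl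
  have hAn' : ∀ n, An n = homogeneousComponent R R c n := fun n => by rw [hAn, hA]; rfl
  simp only [hA', hAn', SetLike.mem_coe]
  refine ⟨fun n => ⟨fun f hf => hf.1, zero_mem _, fun f g => add_mem,
    fun t f => Submodule.smul_mem _ t⟩, ?_, fun f => exists_finset_sum_homogeneousComponent hc⟩
  exact fun S f hf hsum n hn =>
    eq_zero_of_sum_eq_zero_of_support_subset_fiber (fun m hm => (hf m hm).2) hsum hn

/-- Let `R` be a commutative unital ring, `G` a topological space,
`Γ` a group with the discrete topology and `c : G → Γ` continuous.  Let `A` be the set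
of locally constant compactly supported functions `G → R` and, for `n ∈ Γ`, let
`A_n = {f ∈ A | supp f ⊆ c⁻¹(n)}`.  Then each `A_n` is an `R`-submodule of `A`
(contains `0`, closed under addition and scalar multiplication), the family `(A_n)` is
independent, and `A` is the internal direct sum of the `A_n`: every `f ∈ A` is a finite
sum of elements of the `A_n`. -/
theorem steinberg_grading_module
    {G Γ R : Type*} [TopologicalSpace G] [TopologicalSpace Γ] [DiscreteTopology Γ]
    [Group Γ] [CommRing R] (c : G → Γ) (hc : Continuous c)
    (A : Set (G → R))
    (hA : A = {f | IsLocallyConstant f ∧ IsCompact (Function.support f)})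
    (An : Γ → Set (G → R))
    (hAn : ∀ n, An n = {f ∈ A | Function.support f ⊆ c ⁻¹' {n}}) :
    (∀ n : Γ, An n ⊆ A ∧ (0 : G → R) ∈ An n ∧
      (∀ f g : G → R, f ∈ An n → g ∈ An n → f + g ∈ An n) ∧
      (∀ (t : R) (f : G → R), f ∈ An n → t • f ∈ An n)) ∧
    (∀ (S : Finset Γ) (f : Γ → (G → R)), (∀ n ∈ S, f n ∈ An n) →
      (∑ n ∈ S, f n) = 0 → ∀ n ∈ S, f n = 0) ∧
    (∀ f ∈ A, ∃ (S : Finset Γ) (g : Γ → (G → R)),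
      (∀ n ∈ S, g n ∈ An n) ∧ f = ∑ n ∈ S, g n) :=
  steinberg_grading_module_general c hc A hA An hAn
end

section
/- Let X be a topological space and let B be a collection of compact open subsets of X forming a basis for the topology of X. Suppose that for every nonempty finite subcollection G ⊆ B and every finite subcollection H ⊆ B, the set (⋂_{V∈G} V) \ (⋃_{W∈H} W) can be written as a finite union of pairwise disjoint elements of B. Then every compact open subset U of X can be written as a finite union of pairwise disjoint elements of B. -/
/-!
By compactness `U` is a finite union `V₁ ∪ ⋯ ∪ Vₙ` of basis sets, and it is the disjoint union of
the differences `Vₖ \ (Vₖ₊₁ ∪ ⋯ ∪ Vₙ)`, each of which is by hypothesis a finite disjoint union of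
basis sets.
-/

open Set

namespace Set

def IsFiniteDisjointUnionOf {α : Type*} (B : Set (Set α)) (S : Set α) : Prop :=
  ∃ P : Finset (Set α), ↑P ⊆ B ∧ (↑P : Set (Set α)).Pairwise Disjoint ∧ S = ⋃ V ∈ P, V

namespace IsFiniteDisjointUnionOf

variable {α : Type*} {B : Set (Set α)}

theorem empty : IsFiniteDisjointUnionOf B ∅ :=
  ⟨∅, by simp, by simp, by simp⟩

theorem union {s t : Set α} (hs : IsFiniteDisjointUnionOf B s) (ht : IsFiniteDisjointUnionOf B t)
    (hst : Disjoint s t) : IsFiniteDisjointUnionOf B (s ∪ t) := by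
  classical
  obtain ⟨P, hPB, hPd, rfl⟩ := hs
  obtain ⟨Q, hQB, hQd, rfl⟩ := ht
  refine ⟨P ∪ Q, by simpa using union_subset hPB hQB, ?_, (Finset.set_biUnion_union P Q id).symm⟩
  rw [Finset.coe_union]
  refine PairwiseDisjoint.union (f := id) hPd hQd fun V hV W hW _ ↦ hst.mono ?_ ?_
  · exact subset_biUnion_of_mem (u := id) hV
  · exact subset_biUnion_of_mem (u := id) hW

theorem biUnion_finset
    (hsdiff : ∀ V ∈ B, ∀ H : Finset (Set α), ↑H ⊆ B →
      IsFiniteDisjointUnionOf B (V \ ⋃ W ∈ H, W))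
    {G : Finset (Set α)} (hG : ↑G ⊆ B) : IsFiniteDisjointUnionOf B (⋃ V ∈ G, V) := by
  classical
  induction G using Finset.induction_on with
  | empty => simpa using empty
  | insert V G _ ih =>
    rw [Finset.coe_insert, insert_subset_iff] at hG
    rw [Finset.set_biUnion_insert, ← sdiff_union_self]
    exact (hsdiff V hG.1 G hG.2).union (ih hG.2) disjoint_sdiff_left

end IsFiniteDisjointUnionOf

end Set

theorem TopologicalSpace.IsTopologicalBasis.exists_finset_eq_biUnion_of_isCompact_isOpen
    {X : Type*} [TopologicalSpace X] {B : Set (Set X)} (hB : IsTopologicalBasis B)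
    {U : Set X} (hUc : IsCompact U) (hUo : IsOpen U) :
    ∃ G : Finset (Set X), ↑G ⊆ B ∧ U = ⋃ V ∈ G, V := by
  classical
  obtain ⟨s, rfl⟩ := eq_sUnion_finset_of_isTopologicalBasis_of_isCompact_open B hB U hUc hUo
  refine ⟨s.image Subtype.val, by simp, ?_⟩
  rw [sUnion_image, Finset.set_biUnion_finset_image, Finset.set_biUnion_coe]

theorem compactOpen_eq_finite_disjoint_union_of_basis_general
    {X : Type*} [TopologicalSpace X] (B : Set (Set X))
    (hBbasis : TopologicalSpace.IsTopologicalBasis B)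
    (hdiff : ∀ (G H : Finset (Set X)), ↑G ⊆ B → ↑H ⊆ B → G.Nonempty →
      ∃ P : Finset (Set X), ↑P ⊆ B ∧ (↑P : Set (Set X)).Pairwise Disjoint ∧
        (⋂ V ∈ G, V) \ (⋃ W ∈ H, W) = ⋃ V ∈ P, V)
    (U : Set X) (hUcomp : IsCompact U) (hUopen : IsOpen U) :
    ∃ P : Finset (Set X), ↑P ⊆ B ∧ (↑P : Set (Set X)).Pairwise Disjoint ∧
      U = ⋃ V ∈ P, V := by
  have hsdiff : ∀ V ∈ B, ∀ H : Finset (Set X), ↑H ⊆ B →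
      IsFiniteDisjointUnionOf B (V \ ⋃ W ∈ H, W) := fun V hV H hH ↦ by
    have h := hdiff {V} H (by simpa using hV) hH (Finset.singleton_nonempty V)
    rwa [Finset.set_biInter_singleton] at h
  obtain ⟨G, hGB, rfl⟩ := hBbasis.exists_finset_eq_biUnion_of_isCompact_isOpen hUcomp hUopen
  exact IsFiniteDisjointUnionOf.biUnion_finset hsdiff hGB

/-- Let `B` be a basis of compact open sets for a topological space
`X`.  Suppose that for every nonempty finite `G ⊆ B` and finite `H ⊆ B`, the set
`(⋂_{V ∈ G} V) \ (⋃_{W ∈ H} W)` is a finite union of pairwise disjoint elements of `B`.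
Then every compact open `U ⊆ X` is a finite union of pairwise disjoint elements
of `B`. -/
theorem compactOpen_eq_finite_disjoint_union_of_basis
    {X : Type*} [TopologicalSpace X] (B : Set (Set X))
    (hBco : ∀ V ∈ B, IsCompact V ∧ IsOpen V)
    (hBbasis : TopologicalSpace.IsTopologicalBasis B)
    (hdiff : ∀ (G H : Finset (Set X)), ↑G ⊆ B → ↑H ⊆ B → G.Nonempty →
      ∃ P : Finset (Set X), ↑P ⊆ B ∧ (↑P : Set (Set X)).Pairwise Disjoint ∧
        (⋂ V ∈ G, V) \ (⋃ W ∈ H, W) = ⋃ V ∈ P, V)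
    (U : Set X) (hUcomp : IsCompact U) (hUopen : IsOpen U) :
    ∃ P : Finset (Set X), ↑P ⊆ B ∧ (↑P : Set (Set X)).Pairwise Disjoint ∧
      U = ⋃ V ∈ P, V :=
  compactOpen_eq_finite_disjoint_union_of_basis_general B hBbasis hdiff U hUcomp hUopen
end

section
/- Let Z and Y be topological spaces with Y Hausdorff, let r : Z → Y be a continuous open map, and let U_1, …, U_n be compact open subsets of Z. Define V_1 := U_1 and, recursively, V_i := U_i \ r⁻¹(r(U_1) ∪ ⋯ ∪ r(U_{i−1})) for 2 ≤ i ≤ n. Then each V_i is a compact open subset of Z, the images r(V_1), …, r(V_n) are pairwise disjoint, and ⋃_{i=1}^n r(V_i) = ⋃_{i=1}^n r(U_i). -/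
/-! Removing from `U i` the preimage of the earlier images `r '' U j` cuts its image down to
`r '' U i \ ⋃ j < i, r '' U j`, i.e. the `r '' V i` are the `disjointed` sets of the `r '' U i`,
which are pairwise disjoint with the same union. Each `r '' U j` is clopen (open since `r` is
open, closed as a compact subset of a Hausdorff space), so `V i` is the compact open `U i` minus
a clopen set. -/

open Set

theorem disjointed_eq_diff_biUnion_lt {α ι : Type*} [Preorder ι] [LocallyFiniteOrderBot ι]
    (f : ι → Set α) (i : ι) : disjointed f i = f i \ ⋃ j, ⋃ _ : j < i, f j := by
  simp only [disjointed_apply, Finset.sup_eq_iSup, Finset.mem_Iio, iSup_eq_iUnion]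

theorem image_diff_preimage_biUnion_lt {Z Y ι : Type*} [Preorder ι] [LocallyFiniteOrderBot ι]
    (r : Z → Y) (U : ι → Set Z) (i : ι) :
    r '' (U i \ r ⁻¹' ⋃ j, ⋃ _ : j < i, r '' U j) = disjointed (fun j => r '' U j) i := by
  rw [image_sdiff_preimage, disjointed_eq_diff_biUnion_lt]

section Topology

variable {Z Y : Type*} [TopologicalSpace Z] [TopologicalSpace Y] {r : Z → Y}

theorem IsOpenMap.isClopen_image_of_isCompact [T2Space Y] (hro : IsOpenMap r)
    (hrc : Continuous r) {U : Set Z} (hUcomp : IsCompact U) (hUopen : IsOpen U) :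
    IsClopen (r '' U) :=
  ⟨(hUcomp.image hrc).isClosed, hro U hUopen⟩

theorem IsCompact.diff_preimage_isClopen (hrc : Continuous r) {U : Set Z} {W : Set Y}
    (hUcomp : IsCompact U) (hUopen : IsOpen U) (hW : IsClopen W) :
    IsCompact (U \ r ⁻¹' W) ∧ IsOpen (U \ r ⁻¹' W) :=
  have hW' := hW.preimage hrc
  ⟨hUcomp.diff hW'.isOpen, hUopen.sdiff hW'.isClosed⟩

end Topology

/-- Let `r : Z → Y` be a continuous open map into a Hausdorff space
and `U 0, …, U (n-1)` compact open subsets of `Z`.  Define `V 0 = U 0` and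
`V i = U i \ r⁻¹(r(U 0) ∪ ⋯ ∪ r(U (i-1)))`.  Then each `V i` is compact open, the
images `r '' V i` are pairwise disjoint, and `⋃ i, r '' V i = ⋃ i, r '' U i`. -/
theorem disjointification_of_images
    {Z Y : Type*} [TopologicalSpace Z] [TopologicalSpace Y] [T2Space Y]
    (r : Z → Y) (hrc : Continuous r) (hro : IsOpenMap r)
    (n : ℕ) (U : Fin n → Set Z)
    (hUcomp : ∀ i, IsCompact (U i)) (hUopen : ∀ i, IsOpen (U i))
    (V : Fin n → Set Z)
    (hV : ∀ i, V i = U i \ r ⁻¹' (⋃ j : Fin n, ⋃ _ : j < i, r '' U j)) :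
    (∀ i, IsCompact (V i) ∧ IsOpen (V i)) ∧
    (Pairwise fun i j => Disjoint (r '' V i) (r '' V j)) ∧
    (⋃ i, r '' V i) = ⋃ i, r '' U i := by
  have hclopen (j : Fin n) : IsClopen (r '' U j) :=
    hro.isClopen_image_of_isCompact hrc (hUcomp j) (hUopen j)
  have himage (i : Fin n) : r '' V i = disjointed (fun j => r '' U j) i := by
    rw [hV i, image_diff_preimage_biUnion_lt]
  refine ⟨fun i => ?_, ?_, ?_⟩
  · rw [hV i]
    exact (hUcomp i).diff_preimage_isClopen hrc (hUopen i)
      (isClopen_iUnion_of_finite fun j => isClopen_iUnion_of_finite fun _ => hclopen j)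
  · intro i j hij
    rw [himage, himage]
    exact disjoint_disjointed _ hij
  · simp only [himage]
    exact iUnion_disjointed
end

section
/- Let E be a directed graph, let F⁰ ⊆ E⁰ be a set of vertices, and set T⁰ := E⁰ \ F⁰. Assume that for every infinite path y ∈ E^∞ with r_E(y) ∈ T⁰ and s_E(y_i) ∈ T⁰ for all i ≥ 1, there exists a finite path μ with r_E(μ) ∈ F⁰ and s_E(μ) = r_E(y). Then for every infinite path x ∈ E^∞ there exist n ∈ ℕ and a finite path μ (possibly a vertex) with r_E(μ) ∈ F⁰ and s_E(μ) = r_E(σⁿ(x)). -/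
/-- A finite path in a directed graph with vertex set `V`, edge set `E` and range and
source maps `r s : E → V`.  A path is a (possibly empty) list of composable edges
together with its range vertex; a path with no edges is a vertex. -/
structure GraphPath (V E : Type*) (r s : E → V) where
  /-- the range vertex of the path -/
  vertex : V
  /-- the list of edges `μ₁μ₂⋯μₙ` of the path -/
  edges : List E
  head_eq : ∀ e ∈ edges.head?, r e = vertex
  chain : edges.Chain' fun e f => s e = r f

namespace GraphPath

variable {V E : Type*} {r s : E → V}

/-- The range `r_E(μ)` of a finite path. -/
def rng (p : GraphPath V E r s) : V := p.vertex

/-- The source `s_E(μ)` of a finite path. -/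
def src (p : GraphPath V E r s) : V := (p.edges.getLast?.map s).getD p.vertex

def ofVertex (v : V) : GraphPath V E r s where
  vertex := v
  edges := []
  head_eq := by simp
  chain := .nil

end GraphPath

theorem exists_range_mem_or_forall_notMem {V E : Type*} {r s : E → V} (F : Set V)
    {x : ℕ → E} (hx : ∀ i, s (x i) = r (x (i + 1))) :
    (∃ n, r (x n) ∈ F) ∨ (r (x 0) ∉ F ∧ ∀ i, s (x i) ∉ F) := by
  by_cases hx0 : r (x 0) ∈ F
  · exact .inl ⟨0, hx0⟩
  by_cases hxF : ∃ i, s (x i) ∈ F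
  · obtain ⟨i, hi⟩ := hxF
    exact .inl ⟨i + 1, hx i ▸ hi⟩
  · exact .inr ⟨hx0, not_exists.mp hxF⟩

/-- Let `F⁰ ⊆ E⁰` and `T⁰ := E⁰ \ F⁰`.  Assume that for every
infinite path `y` with `r_E(y) ∈ T⁰` and `s_E(yᵢ) ∈ T⁰` for all `i`, there is a finite
path `μ` with `r_E(μ) ∈ F⁰` and `s_E(μ) = r_E(y)`.  Then for every infinite path `x`
there are `n ∈ ℕ` and a finite path `μ` (possibly a vertex) with `r_E(μ) ∈ F⁰` and
`s_E(μ) = r_E(σⁿ(x))`.  Infinite paths are encoded as sequences `x : ℕ → E` with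
`s(xᵢ) = r(xᵢ₊₁)`, so that `r_E(σⁿ(x)) = r (x n)`. -/
theorem orbit_meets_F0
    {V E : Type*} (r s : E → V) (F0 : Set V)
    (hT2 : ∀ y : ℕ → E, (∀ i, s (y i) = r (y (i + 1))) →
      r (y 0) ∉ F0 → (∀ i, s (y i) ∉ F0) →
      ∃ μ : GraphPath V E r s, μ.rng ∈ F0 ∧ μ.src = r (y 0)) :
    ∀ x : ℕ → E, (∀ i, s (x i) = r (x (i + 1))) →
      ∃ (n : ℕ) (μ : GraphPath V E r s), μ.rng ∈ F0 ∧ μ.src = r (x n) := by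
  intro x hx
  rcases exists_range_mem_or_forall_notMem F0 hx with ⟨n, hn⟩ | ⟨hx0, hxT⟩
  · exact ⟨n, .ofVertex (r (x n)), hn, rfl⟩
  · exact ⟨0, hT2 x hx hx0 hxT⟩
end
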